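/- arXiv:1210.0585 — 2 statements merged into one kernel-verified Lean document; each statement's English description precedes it below -/
import Mathlib

section
/- Let λ > 0, a > 0, and define h(ε) = (2π/√3) · (1 + (λ²/2)·ρ(ε)²) / sqrt(λ² + 8aε²) with ρ(ε)² = -λ/(2a) + sqrt(λ² + 8aε²)/(2a). Then the second derivative of h at ε = 0 equals 2·(2π/√3)·(1 - 4a/λ³). -/
/-!
Since `√(λ² + 8aε²)² = λ² + 8aε²`, the function is `h(ε) = Φ(ε²)` with
`Φ(t) = Cλ²/(4a) + C(1 - λ³/(4a)) / √(λ² + 8at)`, `C = 2π/√3`.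
Differentiating `ε ↦ Φ(ε²)` twice gives `h''(0) = 2Φ'(0)` as soon as `Φ'` is continuous at `0`,
and `Φ'(0) = -4aC(1 - λ³/(4a))/λ³`.
-/

open Real Filter Topology

theorem hasDerivAt_mul_of_continuousAt_zero {ψ : ℝ → ℝ} (hψ : ContinuousAt ψ 0) :
    HasDerivAt (fun x => x * ψ x) (ψ 0) 0 := by
  rw [hasDerivAt_iff_tendsto_slope_zero]
  refine hψ.tendsto.mono_left nhdsWithin_le_nhds |>.congr' ?_
  filter_upwards [self_mem_nhdsWithin] with t (ht : t ≠ 0)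
  simp [ht]

theorem deriv_deriv_comp_sq_zero {φ φ' : ℝ → ℝ} (hφ : ∀ᶠ t in 𝓝 0, HasDerivAt φ (φ' t) t)
    (hφ' : ContinuousAt φ' 0) :
    deriv (deriv fun x => φ (x ^ 2)) 0 = 2 * φ' 0 := by
  have hsq : ContinuousAt (fun x : ℝ => x ^ 2) 0 := (continuous_pow 2).continuousAt
  have hderiv : deriv (fun x => φ (x ^ 2)) =ᶠ[𝓝 0] fun x => x * (2 * φ' (x ^ 2)) := by
    have hsq' : Tendsto (fun x : ℝ => x ^ 2) (𝓝 0) (𝓝 0) := by simpa using hsq.tendsto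
    filter_upwards [hsq'.eventually hφ] with x hx
    refine (HasDerivAt.comp (h := fun x : ℝ => x ^ 2) x hx (hasDerivAt_pow 2 x)).deriv.trans
      ?_
    push_cast
    ring
  rw [hderiv.deriv_eq]
  simpa using (hasDerivAt_mul_of_continuousAt_zero
    (continuousAt_const.mul (hφ'.comp_of_eq hsq (by simp)))).deriv

theorem hasDerivAt_inv_sqrt_affine {b c t : ℝ} (h : 0 < c + b * t) :
    HasDerivAt (fun t => (√(c + b * t))⁻¹) (-(b / 2) / √(c + b * t) ^ 3) t := by
  refine ((((hasDerivAt_id t).const_mul b).const_add c).sqrt h.ne'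
    |>.inv (sqrt_pos.2 h).ne').congr_deriv ?_
  simp only [id, mul_one]
  ring

theorem h_second_deriv (lam a : ℝ) (hlam : 0 < lam) (ha : 0 < a) :
    deriv (deriv
      (fun ε : ℝ =>
        (2 * π / Real.sqrt 3) *
          (1 + (lam ^ 2 / 2) *
            (-lam / (2 * a) + Real.sqrt (lam ^ 2 + 8 * a * ε ^ 2) / (2 * a))) /
          Real.sqrt (lam ^ 2 + 8 * a * ε ^ 2))) 0
      = 2 * (2 * π / Real.sqrt 3) * (1 - 4 * a / lam ^ 3) := by
  set C := 2 * π / Real.sqrt 3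
  set Φ : ℝ → ℝ := fun t => C * lam ^ 2 / (4 * a) +
    C * (1 - lam ^ 3 / (4 * a)) * (√(lam ^ 2 + 8 * a * t))⁻¹
  have h_eq_comp_sq : (fun ε : ℝ => C * (1 + (lam ^ 2 / 2) *
      (-lam / (2 * a) + √(lam ^ 2 + 8 * a * ε ^ 2) / (2 * a))) / √(lam ^ 2 + 8 * a * ε ^ 2))
      = fun ε => Φ (ε ^ 2) := by
    funext ε
    have hs : √(lam ^ 2 + 8 * a * ε ^ 2) ≠ 0 := (sqrt_pos.2 (by positivity)).ne'
    simp only [Φ]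
    field_simp
    ring
  have hΦ : ∀ᶠ t in 𝓝 (0 : ℝ), HasDerivAt Φ
      (C * (1 - lam ^ 3 / (4 * a)) * (-(8 * a / 2) / √(lam ^ 2 + 8 * a * t) ^ 3)) t := by
    have hpos : ∀ᶠ t in 𝓝 (0 : ℝ), 0 < lam ^ 2 + 8 * a * t :=
      (show ContinuousAt (fun t : ℝ => lam ^ 2 + 8 * a * t) 0 by fun_prop).eventually
        (lt_mem_nhds (by simpa using pow_pos hlam 2))
    filter_upwards [hpos] with t ht
    exact ((hasDerivAt_inv_sqrt_affine ht).const_mul _).const_add _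
  rw [h_eq_comp_sq, deriv_deriv_comp_sq_zero hΦ (by fun_prop (disch := simp; positivity)),
    mul_zero, add_zero, sqrt_sq hlam.le]
  field_simp
  ring
end

section
/- Let λ > 0, a > 0, and let κ(y) = (λ + 12ay²)/(1 + (λy + 4ay³)²)^{3/2}. Then the function F₀(y) = (2π/√3)·(1/κ(y/3)) satisfies F₀'(0) = 0 and F₀''(0) = (2π/√3)·(λ/3 − 8a/(3λ²)). In particular F₀''(0) < 0 if and only if a > λ³/8. -/
/-!
With `s = g'`, the reciprocal of the curvature is the radius of curvature
`ρ = (1 + s²)^{3/2} / s'`. At a point where `s` and `s''` vanish (here `0`, as `g` is even),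
`ρ' = √(1 + s²) (3 s s'² - (1 + s²) s'') / s'²` vanishes; as its numerator vanishes there, `ρ''`
is the derivative of that numerator over `s'²`: `ρ''(0) = 3 s'(0) - s'''(0) / s'(0)² = 3λ - 24a/λ²`.
The rescaling `y ↦ y / 3` contributes the factor `1/9`.
-/

open Real Filter Topology

theorem rpow_three_halves_eq_mul_sqrt {x : ℝ} (hx : 0 ≤ x) : x ^ (3 / 2 : ℝ) = x * √x := by
  rw [sqrt_eq_rpow, ← rpow_one_add' hx (by norm_num)]
  norm_num

theorem deriv_const_mul_comp_div (c k : ℝ) (f : ℝ → ℝ) :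
    deriv (fun y => c * f (y / k)) = fun y => c / k * deriv f (y / k) := by
  funext y
  simp_rw [div_eq_inv_mul, deriv_const_mul_field']
  rw [deriv_comp_mul_left, smul_eq_mul]
  ring

section Curvature

variable {s s' s'' : ℝ → ℝ} {s''' t : ℝ}

/-- Curvature at `t` of the graph of a function with first derivative `s` and second
derivative `s'`. -/
noncomputable def graphCurvature (s s' : ℝ → ℝ) (t : ℝ) : ℝ :=
  s' t / (1 + s t ^ 2) ^ (3 / 2 : ℝ)

noncomputable def radiusOfCurvature (s s' : ℝ → ℝ) (t : ℝ) : ℝ :=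
  (1 + s t ^ 2) ^ (3 / 2 : ℝ) / s' t

theorem one_div_graphCurvature : 1 / graphCurvature s s' t = radiusOfCurvature s s' t :=
  one_div_div _ _

noncomputable def radiusOfCurvatureDeriv (s s' s'' : ℝ → ℝ) (t : ℝ) : ℝ :=
  √(1 + s t ^ 2) * (3 * s t * s' t ^ 2 - (1 + s t ^ 2) * s'' t) / s' t ^ 2

theorem hasDerivAt_radiusOfCurvature (hs : HasDerivAt s (s' t) t)
    (hs' : HasDerivAt s' (s'' t) t) (ht : s' t ≠ 0) :
    HasDerivAt (radiusOfCurvature s s') (radiusOfCurvatureDeriv s s' s'' t) t := by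
  have hB : 0 ≤ 1 + s t ^ 2 := by positivity
  have h := (((hs.pow 2).const_add 1).rpow_const (p := 3 / 2) (Or.inr (by norm_num))).div hs' ht
  refine h.congr_deriv ?_
  rw [Pi.pow_apply, radiusOfCurvatureDeriv, rpow_three_halves_eq_mul_sqrt hB,
    show (3 / 2 - 1 : ℝ) = 1 / 2 by norm_num, ← sqrt_eq_rpow]
  push_cast
  ring

theorem hasDerivAt_radiusOfCurvatureDeriv_of_critical (h0 : s t = 0) (h2 : s'' t = 0)
    (hs : HasDerivAt s (s' t) t) (hs' : HasDerivAt s' (s'' t) t)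
    (hs'' : HasDerivAt s'' s''' t) (ht : s' t ≠ 0) :
    HasDerivAt (radiusOfCurvatureDeriv s s' s'') (3 * s' t - s''' / s' t ^ 2) t := by
  have hB := (hs.pow 2).const_add 1
  have hsqrt := hB.sqrt (by simp [h0])
  have hN := ((hs.const_mul 3).mul (hs'.pow 2)).sub (hB.mul hs'')
  refine ((hsqrt.mul hN).div (hs'.pow 2) (pow_ne_zero 2 ht)).congr_deriv ?_
  simp only [Pi.pow_apply, h0, h2]
  norm_num
  field_simp

theorem deriv_radiusOfCurvature_of_critical (h0 : s t = 0) (h2 : s'' t = 0)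
    (hs : ∀ᶠ u in 𝓝 t, HasDerivAt s (s' u) u) (hs' : ∀ᶠ u in 𝓝 t, HasDerivAt s' (s'' u) u)
    (hs'' : HasDerivAt s'' s''' t) (ht : s' t ≠ 0) :
    deriv (radiusOfCurvature s s') t = 0 ∧
      deriv (deriv (radiusOfCurvature s s')) t = 3 * s' t - s''' / s' t ^ 2 := by
  have hne : ∀ᶠ u in 𝓝 t, s' u ≠ 0 := hs'.self_of_nhds.continuousAt.eventually_ne ht
  have hderiv : deriv (radiusOfCurvature s s') =ᶠ[𝓝 t] radiusOfCurvatureDeriv s s' s'' :=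
    (hs.and (hs'.and hne)).mono fun u ⟨hsu, hs'u, hu⟩ =>
      (hasDerivAt_radiusOfCurvature hsu hs'u hu).deriv
  constructor
  · rw [hderiv.eq_of_nhds]
    simp [radiusOfCurvatureDeriv, h0, h2]
  · rw [hderiv.deriv_eq]
    exact (hasDerivAt_radiusOfCurvatureDeriv_of_critical h0 h2 hs.self_of_nhds
      hs'.self_of_nhds hs'' ht).deriv

end Curvature

theorem div_three_sub_div_neg_iff {lam a : ℝ} (hlam : 0 < lam) :
    lam / 3 - 8 * a / (3 * lam ^ 2) < 0 ↔ a > lam ^ 3 / 8 := by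
  rw [sub_neg, div_lt_div_iff₀ (by norm_num) (by positivity), gt_iff_lt,
    div_lt_iff₀ (by norm_num)]
  constructor <;> intro h <;> nlinarith

theorem boundary_function_derivs_general (lam a : ℝ) (hlam : 0 < lam) :
    deriv
        (fun y : ℝ => (2 * π / Real.sqrt 3) *
          (1 / ((lam + 12 * a * (y / 3) ^ 2) /
            (1 + (lam * (y / 3) + 4 * a * (y / 3) ^ 3) ^ 2) ^ ((3 : ℝ) / 2)))) 0 = 0 ∧
    deriv (deriv
        (fun y : ℝ => (2 * π / Real.sqrt 3) *
          (1 / ((lam + 12 * a * (y / 3) ^ 2) /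
            (1 + (lam * (y / 3) + 4 * a * (y / 3) ^ 3) ^ 2) ^ ((3 : ℝ) / 2))))) 0
      = (2 * π / Real.sqrt 3) * (lam / 3 - 8 * a / (3 * lam ^ 2)) ∧
    (deriv (deriv
        (fun y : ℝ => (2 * π / Real.sqrt 3) *
          (1 / ((lam + 12 * a * (y / 3) ^ 2) /
            (1 + (lam * (y / 3) + 4 * a * (y / 3) ^ 3) ^ 2) ^ ((3 : ℝ) / 2))))) 0 < 0
      ↔ a > lam ^ 3 / 8) := by
  set s : ℝ → ℝ := fun t => lam * t + 4 * a * t ^ 3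
  set s' : ℝ → ℝ := fun t => lam + 12 * a * t ^ 2
  have hs (t : ℝ) : HasDerivAt s (s' t) t :=
    (((hasDerivAt_id' t).const_mul lam).add ((hasDerivAt_pow 3 t).const_mul (4 * a))).congr_deriv
      (by simp only [s']; ring)
  have hs' (t : ℝ) : HasDerivAt s' (24 * a * t) t :=
    ((hasDerivAt_pow 2 t).const_mul (12 * a)).const_add lam |>.congr_deriv (by ring)
  have hs'' : HasDerivAt (fun t : ℝ => 24 * a * t) (24 * a) 0 := by
    simpa using (hasDerivAt_id' (0 : ℝ)).const_mul (24 * a)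
  obtain ⟨h1, h2⟩ := deriv_radiusOfCurvature_of_critical (by simp [s]) (by simp)
    (.of_forall hs) (.of_forall hs') hs'' (by simpa [s'] using hlam.ne')
  have hκ (t : ℝ) : (lam + 12 * a * t ^ 2) / (1 + (lam * t + 4 * a * t ^ 3) ^ 2) ^ (3 / 2 : ℝ) =
      graphCurvature s s' t := rfl
  have hs'0 : s' 0 = lam := by simp [s']
  have hvalue : 2 * π / √3 / 3 / 3 * (3 * lam - 24 * a / lam ^ 2) =
      2 * π / √3 * (lam / 3 - 8 * a / (3 * lam ^ 2)) := by
    field_simp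
    ring
  simp only [hκ, one_div_graphCurvature, deriv_const_mul_comp_div, zero_div]
  rw [h1, h2, hs'0, hvalue]
  exact ⟨mul_zero _, rfl, (smul_neg_iff_of_pos_left (α := ℝ) (by positivity)).trans
    (div_three_sub_div_neg_iff hlam)⟩

theorem boundary_function_derivs (lam a : ℝ) (hlam : 0 < lam) (ha : 0 < a) :
    deriv
        (fun y : ℝ => (2 * π / Real.sqrt 3) *
          (1 / ((lam + 12 * a * (y / 3) ^ 2) /
            (1 + (lam * (y / 3) + 4 * a * (y / 3) ^ 3) ^ 2) ^ ((3 : ℝ) / 2)))) 0 = 0 ∧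
    deriv (deriv
        (fun y : ℝ => (2 * π / Real.sqrt 3) *
          (1 / ((lam + 12 * a * (y / 3) ^ 2) /
            (1 + (lam * (y / 3) + 4 * a * (y / 3) ^ 3) ^ 2) ^ ((3 : ℝ) / 2))))) 0
      = (2 * π / Real.sqrt 3) * (lam / 3 - 8 * a / (3 * lam ^ 2)) ∧
    (deriv (deriv
        (fun y : ℝ => (2 * π / Real.sqrt 3) *
          (1 / ((lam + 12 * a * (y / 3) ^ 2) /
            (1 + (lam * (y / 3) + 4 * a * (y / 3) ^ 3) ^ 2) ^ ((3 : ℝ) / 2))))) 0 < 0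
      ↔ a > lam ^ 3 / 8) :=
  boundary_function_derivs_general lam a hlam
end
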